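/- arXiv:2110.10060 — 2 statements merged into one kernel-verified Lean document; each statement's English description precedes it below -/
import Mathlib

section
/- Let A and Ã be finitely supported matrix masks. Then D_{Ã^T} ∘ S_A = id on sequences if and only if Σ_r Ã_r^T A_{r+2k} equals the identity matrix when k = 0 and the zero matrix when k ≠ 0. -/
open scoped BigOperators
open Matrix

/-- Subdivision operator `(S_A c)_j = ∑_k A_{j-2k} c_k`. -/
noncomputable def subd {m : ℕ} (A : ℤ → Matrix (Fin (2 * m)) (Fin (2 * m)) ℝ)
    (c : ℤ → Fin (2 * m) → ℝ) : ℤ → Fin (2 * m) → ℝ :=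
  fun j => ∑ᶠ k : ℤ, (A (j - 2 * k)).mulVec (c k)

/-- Decomposition operator `(D_M c)_j = ∑_i M_{i-2j} c_i`. -/
noncomputable def decomp {m : ℕ} (M : ℤ → Matrix (Fin (2 * m)) (Fin (2 * m)) ℝ)
    (c : ℤ → Fin (2 * m) → ℝ) : ℤ → Fin (2 * m) → ℝ :=
  fun j => ∑ᶠ i : ℤ, (M (i - 2 * j)).mulVec (c i)

/-! Exchanging the two finite sums shows that `D_{Ãᵀ} ∘ S_A` is the convolution
`c ↦ (j ↦ ∑_k Φ_{j-k} c_k)` with kernel `Φ_l = ∑_r Ã_rᵀ A_{r+2l}`. A convolution is the identity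
exactly when its kernel is `δ_{l,0} I`, as one sees by testing it on sequences supported at `0`. -/
theorem finsum_comm_of_hasFiniteSupport {α β M : Type*} [AddCommMonoid M] (f : α → β → M)
    (hf : Function.HasFiniteSupport (Function.uncurry f)) :
    ∑ᶠ a, ∑ᶠ b, f a b = ∑ᶠ b, ∑ᶠ a, f a b := by
  have hswap : Function.HasFiniteSupport (Function.uncurry f ∘ Equiv.prodComm β α) :=
    hf.preimage (Equiv.prodComm β α).injective.injOn
  calc ∑ᶠ a, ∑ᶠ b, f a b = ∑ᶠ p, Function.uncurry f p := (finsum_curry _ hf).symm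
    _ = ∑ᶠ q, Function.uncurry f (Equiv.prodComm β α q) :=
      (finsum_comp_equiv (Equiv.prodComm β α)).symm
    _ = ∑ᶠ b, ∑ᶠ a, f a b := finsum_curry _ hswap

theorem forall_finsum_mulVec_sub_eq_iff {G n R : Type*} [AddGroup G] [DecidableEq G]
    [Fintype n] [DecidableEq n] [NonAssocSemiring R] (Φ : G → Matrix n n R) :
    (∀ c : G → n → R, (fun j => ∑ᶠ k, Φ (j - k) *ᵥ c k) = c) ↔
      ∀ k, Φ k = if k = 0 then 1 else 0 := by
  constructor
  · intro h k
    rw [ext_iff_mulVec]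
    intro v
    have hk := congrFun (h (Pi.single 0 v)) k
    rw [finsum_eq_single _ 0 fun i hi => by rw [Pi.single_eq_of_ne hi, mulVec_zero]] at hk
    simpa [Pi.single_apply, apply_ite (· *ᵥ v)] using hk
  · intro h c
    funext j
    rw [finsum_eq_single _ j fun k hk => by rw [h, if_neg (sub_ne_zero.2 hk.symm), zero_mulVec]]
    simp [h]

theorem decomp_transpose_subd_apply {m : ℕ} (A At : ℤ → Matrix (Fin (2 * m)) (Fin (2 * m)) ℝ)
    (hA : (Function.support A).Finite) (hAt : (Function.support At).Finite)
    (c : ℤ → Fin (2 * m) → ℝ) (j : ℤ) :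
    decomp (fun j => (At j)ᵀ) (subd A c) j =
      ∑ᶠ k, (∑ᶠ r, (At r)ᵀ * A (r + 2 * (j - k))) *ᵥ c k := by
  have hinner_fin (i : ℤ) : (Function.support fun k => A (i - 2 * k) *ᵥ c k).Finite := by
    refine (hA.preimage (f := fun k => i - 2 * k) fun k _ l _ h => by dsimp at h; omega).subset
      (Function.support_subset_iff'.2 fun k hk => ?_)
    rw [Set.mem_preimage, Function.notMem_support] at hk
    simp [hk]
  have hjoint_fin : Function.HasFiniteSupport
      (Function.uncurry fun i k => (At (i - 2 * j))ᵀ *ᵥ (A (i - 2 * k) *ᵥ c k)) := by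
    refine ((hAt.prod hA).preimage (f := fun p : ℤ × ℤ => (p.1 - 2 * j, p.1 - 2 * p.2))
      fun p _ q _ h => by simp only [Prod.mk.injEq] at h; ext <;> omega).subset
      (Function.support_subset_iff'.2 fun ⟨i, k⟩ hik => ?_)
    simp only [Set.mem_preimage, Set.mem_prod, Function.mem_support, not_and_or, not_not] at hik
    rcases hik with hik | hik <;> simp [hik]
  have hcorr_fin (l : ℤ) : (Function.support fun r => (At r)ᵀ * A (r + 2 * l)).Finite := by
    refine hAt.subset (Function.support_subset_iff'.2 fun r hr => ?_)
    simp [Function.notMem_support.1 hr]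
  calc decomp (fun j => (At j)ᵀ) (subd A c) j
      = ∑ᶠ i, ∑ᶠ k, (At (i - 2 * j))ᵀ *ᵥ (A (i - 2 * k) *ᵥ c k) :=
        finsum_congr fun i => map_finsum (mulVecLin (At (i - 2 * j))ᵀ) (hinner_fin i)
    _ = ∑ᶠ k, ∑ᶠ i, (At (i - 2 * j))ᵀ *ᵥ (A (i - 2 * k) *ᵥ c k) :=
        finsum_comm_of_hasFiniteSupport _ hjoint_fin
    _ = ∑ᶠ k, ∑ᶠ r, ((At r)ᵀ * A (r + 2 * (j - k))) *ᵥ c k := by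
        refine finsum_congr fun k => ?_
        rw [← finsum_comp_equiv (Equiv.addRight (2 * j))]
        refine finsum_congr fun r => ?_
        rw [Equiv.coe_addRight, add_sub_cancel_right, mulVec_mulVec,
          show r + 2 * j - 2 * k = r + 2 * (j - k) by ring]
    _ = ∑ᶠ k, (∑ᶠ r, (At r)ᵀ * A (r + 2 * (j - k))) *ᵥ c k :=
        finsum_congr fun k => (map_finsum (mulVec.addMonoidHomLeft (c k)) (hcorr_fin _)).symm

/-- `D_{Atᵀ} ∘ S_A = id` iff `∑_r At_rᵀ A_{r+2k} = δ_{k,0} · I`. -/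
theorem biorthogonality_iff {m : ℕ}
    (A At : ℤ → Matrix (Fin (2 * m)) (Fin (2 * m)) ℝ)
    (hA : (Function.support A).Finite) (hAt : (Function.support At).Finite) :
    (∀ c : ℤ → Fin (2 * m) → ℝ, decomp (fun j => (At j)ᵀ) (subd A c) = c) ↔
      (∀ k : ℤ, (∑ᶠ r : ℤ, (At r)ᵀ * A (r + 2 * k)) =
        if k = 0 then (1 : Matrix (Fin (2 * m)) (Fin (2 * m)) ℝ) else 0) := by
  have hcomp (c : ℤ → Fin (2 * m) → ℝ) : decomp (fun j => (At j)ᵀ) (subd A c) =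
      fun j => ∑ᶠ k, (∑ᶠ r, (At r)ᵀ * A (r + 2 * (j - k))) *ᵥ c k :=
    funext (decomp_transpose_subd_apply A At hA hAt c)
  simp only [hcomp]
  exact forall_finsum_mulVec_sub_eq_iff fun l => ∑ᶠ r, (At r)ᵀ * A (r + 2 * l)
end

section
/- Let A and Ã be finitely supported matrix masks whose Laurent symbols satisfy Ã^♯(z) A(z) + Ã^♯(−z) A(−z) = 2I for all z on the unit circle (as formal Laurent polynomial identity), where Ã^♯(z) = Σ_k Ã_k^T z^{−k}. Then for every sequence c : ℤ → ℝ^{2m}, D_{Ã^T} S_A c = c. -/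
/-!
Expanding both operators, `(D_{Ãᵀ} S_A c)_j = ∑_k (∑_i Ã_{i-2j}ᵀ A_{i-2k}) c_k`, all sums being
finite. After the shift `i ↦ i + 2j` the inner matrix is the coefficient of `z^{2(j-k)}` in
`Ã^♯(z) A(z)`. At even powers the `(-z)` term of the symbol identity only doubles that coefficient,
so the identity says it is `δ_{jk} I`.
-/

open scoped BigOperators
open Matrix

open Function

section Finsum

variable {α β M : Type*} [AddCommMonoid M]

theorem finsum_comm_of_hasFiniteSupport_s3 {F : α → β → M} (hF : HasFiniteSupport (uncurry F)) :
    ∑ᶠ a, ∑ᶠ b, F a b = ∑ᶠ b, ∑ᶠ a, F a b := by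
  calc ∑ᶠ a, ∑ᶠ b, F a b = ∑ᶠ p, uncurry F p := (finsum_curry _ hF).symm
    _ = ∑ᶠ q, uncurry (flip F) q := (finsum_comp_equiv (Equiv.prodComm β α)).symm
    _ = ∑ᶠ b, ∑ᶠ a, F a b := finsum_curry _ (hF.comp_of_injective Prod.swap_injective)

end Finsum

section MulVec

variable {ι m n α : Type*} [Fintype n] [NonUnitalNonAssocSemiring α]

theorem Matrix.mulVec_finsum (M : Matrix m n α) {v : ι → n → α} (hv : HasFiniteSupport v) :
    M *ᵥ ∑ᶠ i, v i = ∑ᶠ i, M *ᵥ v i :=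
  ({ toFun := (M *ᵥ ·), map_zero' := mulVec_zero M, map_add' := mulVec_add M } :
    (n → α) →+ m → α).map_finsum hv

theorem Matrix.finsum_mulVec {X : ι → Matrix m n α} (hX : HasFiniteSupport X) (v : n → α) :
    (∑ᶠ i, X i) *ᵥ v = ∑ᶠ i, X i *ᵥ v :=
  (mulVec.addMonoidHomLeft v).map_finsum hX

end MulVec

theorem sub_two_mul_injective (a : ℤ) : Injective fun k : ℤ => a - 2 * k :=
  sub_right_injective.comp (mul_right_injective₀ two_ne_zero)

theorem decomp_subd_apply {m : ℕ} {M A : ℤ → Matrix (Fin (2 * m)) (Fin (2 * m)) ℝ}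
    (hM : HasFiniteSupport M) (hA : HasFiniteSupport A) (c : ℤ → Fin (2 * m) → ℝ) (j : ℤ) :
    decomp M (subd A c) j = ∑ᶠ k, (∑ᶠ i, M (i - 2 * j) * A (i - 2 * k)) *ᵥ c k := by
  have hinner (i : ℤ) : HasFiniteSupport fun k => A (i - 2 * k) *ᵥ c k :=
    (hA.comp_of_injective (sub_two_mul_injective i)).subset <|
      support_subset_iff'.2 fun k hk => by
        rw [notMem_support, Function.comp_apply] at hk
        rw [hk, zero_mulVec]
  have houter (k : ℤ) : HasFiniteSupport fun i => M (i - 2 * j) * A (i - 2 * k) :=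
    (hM.comp_of_injective (sub_left_injective (b := 2 * j))).fun_mul_left _
  have hdouble : HasFiniteSupport (uncurry fun i k => (M (i - 2 * j) * A (i - 2 * k)) *ᵥ c k) := by
    refine ((hM.prod hA).preimage (f := fun p : ℤ × ℤ => (p.1 - 2 * j, p.1 - 2 * p.2))
      fun p _ q _ h => ?_).subset fun ⟨i, k⟩ hik => ?_
    · simp only [Prod.mk.injEq] at h
      ext <;> omega
    · simp only [Set.mem_preimage, Set.mem_prod, mem_support]
      constructor <;> (intro h0; simp [h0] at hik)
  calc decomp M (subd A c) j
      = ∑ᶠ i, ∑ᶠ k, M (i - 2 * j) *ᵥ (A (i - 2 * k) *ᵥ c k) :=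
        finsum_congr fun i => mulVec_finsum _ (hinner i)
    _ = ∑ᶠ i, ∑ᶠ k, (M (i - 2 * j) * A (i - 2 * k)) *ᵥ c k := by simp only [mulVec_mulVec]
    _ = ∑ᶠ k, ∑ᶠ i, (M (i - 2 * j) * A (i - 2 * k)) *ᵥ c k :=
        finsum_comm_of_hasFiniteSupport_s3 hdouble
    _ = _ := finsum_congr fun k => (finsum_mulVec (houter k) _).symm

theorem finsum_transpose_mul_add_of_even {n : Type*} [Fintype n] [DecidableEq n]
    {A At : ℤ → Matrix n n ℝ}
    (hsymb : ∀ l : ℤ, (∑ᶠ i : ℤ, ((1 : ℝ) + (-1 : ℝ) ^ l) • ((At i)ᵀ * A (i + l))) =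
      if l = 0 then (2 : ℝ) • (1 : Matrix n n ℝ) else 0)
    {l : ℤ} (hl : Even l) :
    ∑ᶠ i, (At i)ᵀ * A (i + l) = if l = 0 then 1 else 0 := by
  have h := hsymb l
  rw [hl.neg_one_zpow, one_add_one_eq_two, ← smul_finsum] at h
  exact smul_right_injective _ two_ne_zero (h.trans (by split_ifs <;> simp))

theorem finsum_transpose_mul_sub_two_mul {n : Type*} [Fintype n] [DecidableEq n]
    {A At : ℤ → Matrix n n ℝ}
    (hsymb : ∀ l : ℤ, (∑ᶠ i : ℤ, ((1 : ℝ) + (-1 : ℝ) ^ l) • ((At i)ᵀ * A (i + l))) =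
      if l = 0 then (2 : ℝ) • (1 : Matrix n n ℝ) else 0)
    (j k : ℤ) :
    ∑ᶠ i, (At (i - 2 * j))ᵀ * A (i - 2 * k) = if k = j then 1 else 0 := by
  have hshift : ∑ᶠ i, (At (i - 2 * j))ᵀ * A (i - 2 * k) =
      ∑ᶠ i, (At i)ᵀ * A (i + 2 * (j - k)) := by
    rw [← finsum_comp_equiv (Equiv.subRight (2 * j))
      (f := fun i => (At i)ᵀ * A (i + 2 * (j - k)))]
    exact finsum_congr fun i => by rw [Equiv.subRight_apply]; ring_nf
  rw [hshift, finsum_transpose_mul_add_of_even hsymb (even_two_mul _)]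
  exact if_congr (by omega) rfl rfl

/-- If the formal Laurent identity `At^♯(z) A(z) + At^♯(−z) A(−z) = 2I` holds
(stated coefficientwise: the coefficient of `z^l` is `2I` for `l = 0` and `0` otherwise,
where `At^♯(z) = ∑_k At_kᵀ z^{−k}`), then `D_{Atᵀ} S_A c = c` for every sequence `c`. -/
theorem symbol_biorthogonality_implies_id {m : ℕ}
    (A At : ℤ → Matrix (Fin (2 * m)) (Fin (2 * m)) ℝ)
    (hA : (Function.support A).Finite) (hAt : (Function.support At).Finite)
    (hsymb : ∀ l : ℤ, (∑ᶠ i : ℤ, ((1 : ℝ) + (-1 : ℝ) ^ l) • ((At i)ᵀ * A (i + l))) =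
      if l = 0 then (2 : ℝ) • (1 : Matrix (Fin (2 * m)) (Fin (2 * m)) ℝ) else 0) :
    ∀ c : ℤ → Fin (2 * m) → ℝ, decomp (fun j => (At j)ᵀ) (subd A c) = c := by
  intro c
  funext j
  have hAtT : HasFiniteSupport fun i => (At i)ᵀ := by
    simpa only [HasFiniteSupport, support, ne_eq, transpose_eq_zero] using hAt
  rw [decomp_subd_apply hAtT hA, finsum_eq_single _ j fun k hk => ?_]
  · rw [finsum_transpose_mul_sub_two_mul hsymb, if_pos rfl, one_mulVec]
  · rw [finsum_transpose_mul_sub_two_mul hsymb, if_neg hk, zero_mulVec]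
end
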